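/- For Ψ ∈ (0, π/2], F(Ψ) = 1 + (1/6) sin²Ψ + (2√2 sin(Ψ/2) - 2 sin⁴(Ψ/2) - Ψ)/sin Ψ satisfies F(Ψ) < 3/2. -/

import Mathlib

/-!
With `s = sin (Ψ / 2)` and `c = cos (Ψ / 2)` we have `sin Ψ = 2 s c`, and the Taylor bound
`sin t ≤ t - t ^ 3 / 8` on `[0, 1]` gives `Ψ ≥ 2 s + s ^ 3 / 4`. This turns the claim into a
polynomial inequality in `s` and `c`. Bounding `c ≥ 1 - s ^ 2 / 2 - s ^ 4 / 2`, `√2 < 17 / 12` and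
`s ^ 3 ≥ √2 s ^ 4` (as `√2 s ≤ 1`) reduces it to the positivity of a quartic in `s ^ 2 ∈ [0, 1/2]`.
-/

open Real

/-- The limiting resistance of cavities bounded by canonical zigzag lines inscribed in a
circular arc of angular half-size `Ψ`. -/
noncomputable def zigzagResistance (Ψ : ℝ) : ℝ :=
  1 + (1/6) * Real.sin Ψ ^ 2 +
    (2 * Real.sqrt 2 * Real.sin (Ψ/2) - 2 * Real.sin (Ψ/2) ^ 4 - Ψ) / Real.sin Ψ

lemma sin_le_sub_cube_div_eight {t : ℝ} (ht0 : 0 ≤ t) (ht1 : t ≤ 1) : sin t ≤ t - t ^ 3 / 8 := by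
  have h := (abs_le.1 (sin_bound (x := t) (by rwa [abs_of_nonneg ht0]))).2
  rw [abs_of_nonneg ht0] at h
  have : t ^ 5 ≤ t ^ 3 := pow_le_pow_of_le_one ht0 ht1 (by norm_num)
  linarith [pow_nonneg ht0 3]

lemma one_sub_le_of_sq_add_sq_eq_one {s c : ℝ} (hc : 0 ≤ c) (hsc : s ^ 2 + c ^ 2 = 1)
    (hs : 2 * s ^ 2 ≤ 1) : 1 - s ^ 2 / 2 - s ^ 4 / 2 ≤ c := by
  have h : 0 ≤ 3 / 4 - s ^ 2 / 2 - s ^ 4 / 4 := by nlinarith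
  refine abs_le_of_sq_le_sq' ?_ hc |>.2
  nlinarith [mul_nonneg (sq_nonneg (s ^ 2)) h]

lemma quartic_pos {u : ℝ} (hu0 : 0 ≤ u) (hu : 2 * u ≤ 1) :
    0 < 1 / 6 - 19 / 12 * u + 13 / 3 * u ^ 2 - 2 / 3 * u ^ 4 := by
  nlinarith [sq_nonneg (u - 19 / 100), mul_nonneg (sq_nonneg u) (mul_nonneg hu0 (sub_nonneg.2 hu))]

lemma sqrt_two_lt_seventeen_div_twelve : √2 < 17 / 12 := by
  rw [sqrt_lt' (by norm_num)]; norm_num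

lemma zigzag_poly_lt {s c : ℝ} (hs : 0 < s) (hc : 0 ≤ c) (hsc : s ^ 2 + c ^ 2 = 1)
    (hs2 : 2 * s ^ 2 ≤ 1) :
    2 * √2 * s - 2 * s ^ 4 - (2 * s + s ^ 3 / 4) < (1 / 2 - (2 * s * c) ^ 2 / 6) * (2 * s * c) := by
  have hq : 0 ≤ 1 - 4 / 3 * s ^ 2 + 4 / 3 * s ^ 4 := by nlinarith [sq_nonneg (s ^ 2 - 1 / 2)]
  have hrs : √2 * s ≤ 1 := by
    nlinarith [sq_sqrt (show (0:ℝ) ≤ 2 by norm_num), sqrt_nonneg 2]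
  have hs4 : √2 * s ^ 5 ≤ s ^ 4 := by nlinarith [pow_pos hs 4]
  have hs4_lt_one : s ^ 4 < 1 := by nlinarith
  have hbr : 2 * √2 * (1 - s ^ 4) - 2 - s ^ 2 / 4
      < 1 - 11 / 6 * s ^ 2 + 3 / 2 * s ^ 4 - 2 / 3 * s ^ 8 := by
    nlinarith [quartic_pos (sq_nonneg s) hs2,
      mul_lt_mul_of_pos_right sqrt_two_lt_seventeen_div_twelve (sub_pos.2 hs4_lt_one)]
  calc 2 * √2 * s - 2 * s ^ 4 - (2 * s + s ^ 3 / 4)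
      ≤ s * (2 * √2 * (1 - s ^ 4) - 2 - s ^ 2 / 4) := by nlinarith
    _ < s * (1 - 11 / 6 * s ^ 2 + 3 / 2 * s ^ 4 - 2 / 3 * s ^ 8) := by gcongr
    _ = s * (1 - s ^ 2 / 2 - s ^ 4 / 2) * (1 - 4 / 3 * s ^ 2 + 4 / 3 * s ^ 4) := by ring
    _ ≤ s * c * (1 - 4 / 3 * s ^ 2 + 4 / 3 * s ^ 4) := by
      gcongr; exact one_sub_le_of_sq_add_sq_eq_one hc hsc hs2
    _ = (1 / 2 - (2 * s * c) ^ 2 / 6) * (2 * s * c) := by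
      linear_combination (4 / 3 * s ^ 3 * c) * hsc

theorem zigzagResistance_lt (Ψ : ℝ) (hΨ : Ψ ∈ Set.Ioc 0 (π/2)) :
    zigzagResistance Ψ < 3/2 := by
  obtain ⟨hΨ0, hΨπ⟩ := hΨ
  have hπ := pi_pos
  have hπ4 := pi_le_four
  have hΨ2 : Ψ = 2 * (Ψ / 2) := by ring
  set s := sin (Ψ / 2)
  set c := cos (Ψ / 2)
  have hs : 0 < s := sin_pos_of_pos_of_lt_pi (by positivity) (by linarith)
  have hc : 0 < c := cos_pos_of_mem_Ioo ⟨by linarith, by linarith⟩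
  have hsin : sin Ψ = 2 * s * c := by rw [hΨ2, sin_two_mul]
  have hs2 : 2 * s ^ 2 ≤ 1 := by
    have hcos : 0 ≤ cos Ψ := cos_nonneg_of_mem_Icc ⟨by linarith, hΨπ⟩
    rw [hΨ2, cos_two_mul', cos_sq'] at hcos
    linarith
  have hsΨ : 2 * s + s ^ 3 / 4 ≤ Ψ := by
    have := sin_le_sub_cube_div_eight (t := Ψ / 2) (by positivity) (by linarith)
    have := pow_le_pow_left₀ hs.le (sin_le (x := Ψ / 2) (by positivity)) 3
    linarith
  have hfrac : (2 * √2 * s - 2 * s ^ 4 - Ψ) / sin Ψ < 1 / 2 - sin Ψ ^ 2 / 6 := by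
    rw [div_lt_iff₀ (hsin ▸ by positivity), hsin]
    linarith [zigzag_poly_lt hs hc.le (sin_sq_add_cos_sq _) hs2]
  rw [zigzagResistance]
  linarith
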